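/- arXiv:1510.01819 — 2 statements merged into one kernel-verified Lean document; each statement's English description precedes it below -/
import Mathlib

section
/- For all integers r ≥ 3 and b ≥ 1 there exists a finite set P of points in general position in the plane, partitioned into a set R of r red points and a set B of b blue points, such that every convex set C ⊆ ℝ² with |C ∩ R| ≥ ⌈(r+1)/2⌉ + 1 satisfies B ⊆ C. -/
/-!
Put the `r` red points among the vertices of a regular `m`-gon on the unit circle, where
`m = 2 ⌊r/2⌋ + 1` is odd and `k = ⌈(r+1)/2⌉ = (m+1)/2`, and the blue points on a tiny circle of
radius `δ < -cos (π k / m)` around the centre, chosen one by one off all lines through two earlier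
points (a line meets a circle at most twice). If a convex set `C` misses a blue point `x`, a line
separates `x` from the red points in `C`; these then lie in an open half-plane `⟪w, ·⟫ > -‖w‖ δ`,
i.e. on an open arc of the unit circle of length `2π k / m`, which contains at most `k` vertices
of the regular `m`-gon.
-/

open scoped Classical

open Real Metric

local notation "ℝ²" => EuclideanSpace ℝ (Fin 2)

section GeneralPosition

variable (k : Type*) {V : Type*} [Field k] [AddCommGroup V] [Module k V]

def GeneralPosition (s : Set V) : Prop :=
  ∀ p ∈ s, ∀ q ∈ s, ∀ r ∈ s, p ≠ q → p ≠ r → q ≠ r → ¬ Collinear k ({p, q, r} : Set V)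

variable {k}

theorem generalPosition_insert {s : Set V} {p : V} (hs : GeneralPosition k s)
    (hp : ∀ q ∈ s, ∀ r ∈ s, q ≠ r → ¬ Collinear k ({p, q, r} : Set V)) :
    GeneralPosition k (insert p s) := by
  intro a ha b hb c hc hab hac hbc
  rcases ha with rfl | ha
  · rcases hb with rfl | hb
    · exact absurd rfl hab
    rcases hc with rfl | hc
    · exact absurd rfl hac
    exact hp b hb c hc hbc
  rcases hb with rfl | hb
  · rcases hc with rfl | hc
    · exact absurd rfl hbc
    rw [Set.insert_comm]
    exact hp a ha c hc hac
  rcases hc with rfl | hc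
  · rw [Set.pair_comm, Set.insert_comm]
    exact hp a ha b hb hab
  exact hs a ha b hb c hc hab hac hbc

theorem GeneralPosition.exists_insert {S : Set V} (hS : S.Infinite)
    (hline : ∀ q r : V, q ≠ r → {p ∈ S | Collinear k ({p, q, r} : Set V)}.Finite)
    {Q : Finset V} (hQ : GeneralPosition k (Q : Set V)) :
    ∃ p ∈ S, p ∉ Q ∧ GeneralPosition k (insert p (Q : Set V)) := by
  set bad : Set V := ↑Q ∪ ⋃ q ∈ Q, ⋃ r ∈ Q, ⋃ _ : q ≠ r, {p ∈ S | Collinear k ({p, q, r} : Set V)}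
  have hbad : bad.Finite :=
    Q.finite_toSet.union <| Q.finite_toSet.biUnion fun q _ => Q.finite_toSet.biUnion
      fun r _ => Set.finite_iUnion fun hqr => hline q r hqr
  obtain ⟨p, hpS, hpbad⟩ := (hS.sdiff hbad).nonempty
  refine ⟨p, hpS, fun hpQ => hpbad (Or.inl hpQ), generalPosition_insert hQ ?_⟩
  exact fun q hq r hr hqr hcol =>
    hpbad (Or.inr (Set.mem_biUnion hq (Set.mem_biUnion hr (Set.mem_iUnion.2 ⟨hqr, hpS, hcol⟩))))

theorem GeneralPosition.exists_finset_union [DecidableEq V] {S : Set V} (hS : S.Infinite)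
    (hline : ∀ q r : V, q ≠ r → {p ∈ S | Collinear k ({p, q, r} : Set V)}.Finite) (n : ℕ)
    {Q : Finset V} (hQ : GeneralPosition k (Q : Set V)) :
    ∃ B : Finset V, ↑B ⊆ S ∧ B.card = n ∧ Disjoint Q B ∧ GeneralPosition k (↑(Q ∪ B) : Set V) := by
  induction n with
  | zero => exact ⟨∅, by simp, rfl, by simp, by simpa using hQ⟩
  | succ n ih =>
    obtain ⟨B, hBS, hBcard, hQB, hQBgp⟩ := ih
    obtain ⟨p, hpS, hpQB, hgp⟩ := hQBgp.exists_insert hS hline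
    rw [Finset.mem_union, not_or] at hpQB
    refine ⟨insert p B, by simpa using Set.insert_subset hpS hBS, ?_, ?_, ?_⟩
    · rw [Finset.card_insert_of_notMem hpQB.2, hBcard]
    · exact Finset.disjoint_insert_right.2 ⟨hpQB.1, hQB⟩
    · simpa [Finset.union_insert] using hgp

end GeneralPosition

section InnerProductSpace

variable {V : Type*} [NormedAddCommGroup V] [InnerProductSpace ℝ V]

theorem EuclideanGeometry.Cospherical.generalPosition {s : Set V}
    (hs : EuclideanGeometry.Cospherical s) : GeneralPosition ℝ s :=
  fun _p hp _q hq _r hr hpq hpr hqr => affineIndependent_iff_not_collinear_set.1 <|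
    hs.affineIndependent_of_mem_of_ne hp hq hr hpq hpr hqr

theorem finite_setOf_mem_sphere_collinear (x : V) (ρ : ℝ) {q r : V} (hqr : q ≠ r) :
    {p ∈ sphere x ρ | Collinear ℝ ({p, q, r} : Set V)}.Finite := by
  by_contra hinf
  obtain ⟨t, hts, htcard⟩ := Set.Infinite.exists_subset_card_eq hinf 3
  obtain ⟨a, b, c, hab, hac, hbc, rfl⟩ := Finset.card_eq_three.1 htcard
  have hline : ∀ p ∈ ({a, b, c} : Finset V), p ∈ line[ℝ, q, r] := fun p hp =>
    (hts hp).2.mem_affineSpan_of_mem_of_ne (by simp) (by simp) (by simp) hqr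
  have hsph : EuclideanGeometry.Cospherical (sphere x ρ) := ⟨x, ρ, fun _ h => h⟩
  refine hsph.generalPosition a (hts (by simp)).1
    b (hts (by simp)).1 c (hts (by simp)).1 hab hac hbc ?_
  exact collinear_triple_of_mem_affineSpan_pair (hline a (by simp)) (hline b (by simp))
    (hline c (by simp))

theorem infinite_sphere (hV : 1 < Module.rank ℝ V) (x : V) {ρ : ℝ} (hρ : 0 < ρ) :
    (sphere x ρ).Infinite := by
  have : Nontrivial V := rank_pos_iff_nontrivial.1 (zero_lt_one.trans hV)
  obtain ⟨y, hy⟩ := exists_norm_eq V hρ.le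
  refine (isPreconnected_sphere hV x ρ).infinite_of_nontrivial ⟨x + y, ?_, x - y, ?_, ?_⟩
  · simp [hy]
  · simp [hy]
  · intro h
    rw [sub_eq_add_neg, add_right_inj, eq_neg_iff_add_eq_zero, ← two_smul ℝ, smul_eq_zero] at h
    simp [h.resolve_left two_ne_zero, hρ.ne] at hy

theorem exists_forall_inner_lt_of_notMem_convex [CompleteSpace V] {C : Set V} (hC : Convex ℝ C)
    {T : Finset V} (hTC : ↑T ⊆ C) {x : V} (hx : x ∉ C) :
    ∃ w : V, ∀ t ∈ T, inner ℝ w x < inner ℝ w t := by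
  obtain ⟨f, u, hfx, hfT⟩ := geometric_hahn_banach_point_closed (convex_convexHull ℝ (T : Set V))
    (T.finite_toSet.isCompact_convexHull ℝ).isClosed fun hx' => hx (convexHull_min hTC hC hx')
  refine ⟨(InnerProductSpace.toDual ℝ V).symm f, fun t ht => ?_⟩
  rw [InnerProductSpace.toDual_symm_apply, InnerProductSpace.toDual_symm_apply]
  exact hfx.trans (hfT t (subset_convexHull ℝ _ ht))

end InnerProductSpace

theorem Int.ceil_natCast_add_one_div_two (r : ℕ) : ⌈((r : ℚ) + 1) / 2⌉ = (r / 2 : ℕ) + 1 := by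
  obtain ⟨q, rfl | rfl⟩ := Nat.even_or_odd' r
  · rw [show 2 * q / 2 = q by omega, Int.ceil_eq_iff]
    push_cast
    constructor <;> linarith
  · rw [show (2 * q + 1) / 2 = q by omega, Int.ceil_eq_iff]
    push_cast
    constructor <;> linarith

theorem exists_abs_sub_two_pi_mul_lt_of_cos_lt {α x : ℝ} (hα : 0 ≤ α) (h : cos α < cos x) :
    ∃ n : ℤ, |x - 2 * π * n| < α := by
  refine ⟨round (x / (2 * π)), not_le.1 fun hle => h.not_ge ?_⟩
  have hround : |x - 2 * π * round (x / (2 * π))| ≤ π := by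
    have := abs_sub_round (x / (2 * π))
    have hx : x - 2 * π * round (x / (2 * π)) = 2 * π * (x / (2 * π) - round (x / (2 * π))) := by
      field_simp
    rw [hx, abs_mul, abs_of_pos two_pi_pos]
    nlinarith [pi_pos]
  calc cos x = cos |x - 2 * π * round (x / (2 * π))| := by
        rw [cos_abs, mul_comm, cos_sub_int_mul_two_pi]
    _ ≤ cos α := cos_le_cos_of_nonneg_of_le_pi hα hround hle

theorem card_le_of_forall_cos_lt {m k : ℕ} (hm : 0 < m) {S : Finset ℕ} (hS : ∀ j ∈ S, j < m)
    (φ : ℝ) (h : ∀ j ∈ S, cos (π * k / m) < cos (2 * π * j / m - φ)) : S.card ≤ k := by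
  have hm' : (0 : ℝ) < m := by exact_mod_cast hm
  choose! n hn using fun j hj => exists_abs_sub_two_pi_mul_lt_of_cos_lt (by positivity) (h j hj)
  -- Rescaling by `m / 2π` maps the arc to an open interval of length `k` around `c`,
  -- containing the distinct integers `j - m n j`.
  set c : ℝ := m * φ / (2 * π)
  have hclose : ∀ j ∈ S, |(((j : ℤ) - m * n j : ℤ) : ℝ) - c| < k / 2 := by
    intro j hj
    have hscale : (((j : ℤ) - m * n j : ℤ) : ℝ) - c
        = (2 * π * j / m - φ - 2 * π * n j) * (m / (2 * π)) := by
      simp only [c]; push_cast; field_simp; ring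
    rw [hscale, abs_mul, abs_of_pos (by positivity : (0 : ℝ) < m / (2 * π))]
    calc |2 * π * j / m - φ - 2 * π * n j| * (m / (2 * π)) < π * k / m * (m / (2 * π)) := by
          gcongr; exact hn j hj
      _ = k / 2 := by field_simp
  set a : ℤ := ⌈c - k / 2⌉
  have hmaps : ∀ j ∈ S, (j : ℤ) - m * n j ∈ Finset.Ico a (a + k) := by
    intro j hj
    have := abs_lt.1 (hclose j hj)
    push_cast at this
    have ha : c - k / 2 ≤ a := Int.le_ceil _
    rw [Finset.mem_Ico, Int.ceil_le]
    constructor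
    · push_cast; linarith
    · exact_mod_cast
        (show (((j : ℤ) - m * n j : ℤ) : ℝ) < ((a + k : ℤ) : ℝ) by push_cast; linarith)
  have hinj : Set.InjOn (fun j : ℕ => (j : ℤ) - m * n j) S := by
    intro i hi j hj hij
    have hdvd : (m : ℤ) ∣ (i : ℤ) - j := ⟨n i - n j, by simp only at hij; linarith⟩
    have hlt : |(i : ℤ) - j| < m := by
      have := hS i hi; have := hS j hj
      rw [abs_lt]; omega
    have := Int.eq_zero_of_abs_lt_dvd hdvd hlt
    omega
  simpa using Finset.card_le_card_of_injOn _ hmaps hinj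

theorem cos_pi_mul_succ_div_two_mul_add_one_neg (q : ℕ) :
    cos (π * ((q + 1 : ℕ) : ℝ) / ((2 * q + 1 : ℕ) : ℝ)) < 0 := by
  have hq : (0 : ℝ) < ((2 * q + 1 : ℕ) : ℝ) := by positivity
  refine cos_neg_of_pi_div_two_lt_of_lt ?_ ?_
  · rw [lt_div_iff₀ hq]; push_cast; nlinarith [pi_pos]
  · rw [div_lt_iff₀ hq]; push_cast; nlinarith [pi_pos]

noncomputable def unitVec (θ : ℝ) : ℝ² := !₂[cos θ, sin θ]

theorem inner_unitVec (φ θ : ℝ) : inner ℝ (unitVec φ) (unitVec θ) = cos (θ - φ) := by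
  simp [unitVec, PiLp.inner_apply, Fin.sum_univ_two, cos_sub]

theorem norm_unitVec (θ : ℝ) : ‖unitVec θ‖ = 1 := by
  rw [norm_eq_sqrt_real_inner, inner_unitVec, sub_self, cos_zero, sqrt_one]

theorem exists_eq_norm_smul_unitVec (w : ℝ²) : ∃ φ, w = ‖w‖ • unitVec φ := by
  set z : ℂ := ⟨w 0, w 1⟩
  have hz : ‖z‖ = ‖w‖ := by
    rw [Complex.norm_eq_sqrt_sq_add_sq, EuclideanSpace.norm_eq, Fin.sum_univ_two]
    simp [z]
  refine ⟨z.arg, ?_⟩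
  ext i
  fin_cases i
  · simp [unitVec, ← hz, Complex.norm_mul_cos_arg, z]
  · simp [unitVec, ← hz, Complex.norm_mul_sin_arg, z]

noncomputable def polygonVertex (m j : ℕ) : ℝ² := unitVec (2 * π * j / m)

theorem polygonVertex_injOn {m : ℕ} (hm : 0 < m) : Set.InjOn (polygonVertex m) (Set.Iio m) := by
  intro i hi j hj hij
  have hm' : (0 : ℝ) < m := by exact_mod_cast hm
  have hi' : (i : ℝ) < m := by exact_mod_cast hi
  have hj' : (j : ℝ) < m := by exact_mod_cast hj
  have hcos : cos (2 * π * j / m - 2 * π * i / m) = 1 := by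
    rw [← inner_unitVec, ← polygonVertex, ← polygonVertex, hij, real_inner_self_eq_norm_sq,
      polygonVertex, norm_unitVec, one_pow]
  have hdiff : 2 * π * j / m - 2 * π * i / m = 2 * π * ((j - i) / m) := by ring
  have hi₀ : (0 : ℝ) ≤ i := i.cast_nonneg
  have hj₀ : (0 : ℝ) ≤ j := j.cast_nonneg
  have ht₁ : -1 < ((j : ℝ) - i) / m := by rw [lt_div_iff₀ hm']; linarith
  have ht₂ : ((j : ℝ) - i) / m < 1 := by rw [div_lt_iff₀ hm']; linarith
  rw [hdiff, cos_eq_one_iff_of_lt_of_lt (by nlinarith [pi_pos]) (by nlinarith [pi_pos])] at hcos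
  have : ((j : ℝ) - i) / m = 0 := (mul_eq_zero.1 hcos).resolve_left two_pi_pos.ne'
  rw [div_eq_zero_iff, sub_eq_zero] at this
  exact_mod_cast (this.resolve_right hm'.ne').symm

theorem mem_of_lt_card_polygonVertex {m k : ℕ} (hm : 0 < m) {C : Set ℝ²} (hC : Convex ℝ C)
    {T : Finset ℝ²} (hT : ↑T ⊆ polygonVertex m '' Set.Iio m) (hTC : ↑T ⊆ C) (hk : k < T.card)
    {x : ℝ²} (hx : ‖x‖ < -cos (π * k / m)) : x ∈ C := by
  by_contra hxC
  obtain ⟨w, hw⟩ := exists_forall_inner_lt_of_notMem_convex hC hTC hxC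
  obtain ⟨φ, hφ⟩ := exists_eq_norm_smul_unitVec w
  set S := (Finset.range m).filter fun j => polygonVertex m j ∈ T
  have hTS : T.card ≤ S.card := by
    refine (Finset.card_le_card fun t ht => ?_).trans
      (Finset.card_image_le (f := polygonVertex m))
    obtain ⟨j, hj, rfl⟩ := hT ht
    exact Finset.mem_image_of_mem _ (Finset.mem_filter.2 ⟨Finset.mem_range.2 hj, ht⟩)
  refine hk.not_ge (hTS.trans (card_le_of_forall_cos_lt hm
    (fun j hj => Finset.mem_range.1 (Finset.mem_filter.1 hj).1) φ fun j hj => ?_))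
  have hinner : inner ℝ w (polygonVertex m j) = ‖w‖ * cos (2 * π * j / m - φ) := by
    conv_lhs => rw [hφ]
    rw [real_inner_smul_left, polygonVertex, inner_unitVec]
  have hCS : -(‖w‖ * ‖x‖) ≤ inner ℝ w x := neg_le_of_abs_le (abs_real_inner_le_norm w x)
  have hsep := hw _ (Finset.mem_filter.1 hj).2
  have : -‖x‖ < cos (2 * π * j / m - φ) :=
    lt_of_mul_lt_mul_left (by linarith) (norm_nonneg w)
  linarith

theorem balanced_island_tightness_general (r b : ℕ) :
    ∃ P R B : Finset (EuclideanSpace ℝ (Fin 2)),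
      R ∪ B = P ∧ Disjoint R B ∧ R.card = r ∧ B.card = b ∧
      (∀ p ∈ P, ∀ q ∈ P, ∀ s ∈ P, p ≠ q → p ≠ s → q ≠ s →
        ¬ Collinear ℝ ({p, q, s} : Set (EuclideanSpace ℝ (Fin 2)))) ∧
      ∀ C : Set (EuclideanSpace ℝ (Fin 2)), Convex ℝ C →
        (⌈((r : ℚ) + 1) / 2⌉ + 1 ≤ ((C ∩ (R : Set (EuclideanSpace ℝ (Fin 2)))).ncard : ℤ)) →
        (B : Set (EuclideanSpace ℝ (Fin 2))) ⊆ C := by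
  set k := r / 2 + 1
  set m := 2 * (r / 2) + 1
  have hm : 0 < m := Nat.succ_pos _
  have hδ : 0 < -cos (π * k / m) := neg_pos.2 (cos_pi_mul_succ_div_two_mul_add_one_neg _)
  set R := (Finset.range r).image (polygonVertex m)
  have hRcard : R.card = r := by
    rw [Finset.card_image_of_injOn, Finset.card_range]
    exact (polygonVertex_injOn hm).mono fun j hj => by simp at hj ⊢; omega
  have hRsphere : EuclideanGeometry.Cospherical (R : Set ℝ²) :=
    ⟨0, 1, by simp [R, polygonVertex, norm_unitVec]⟩
  obtain ⟨B, hBsphere, hBcard, hRB, hgp⟩ := hRsphere.generalPosition.exists_finset_union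
    (infinite_sphere (by simp [← Module.finrank_eq_rank]) 0 (half_pos hδ))
    (fun _ _ => finite_setOf_mem_sphere_collinear 0 _) b
  refine ⟨R ∪ B, R, B, rfl, hRB, hRcard, hBcard, hgp, fun C hC hCR x hx => ?_⟩
  have hfilter : C ∩ ↑R = ↑(R.filter (· ∈ C)) := by ext; simp [and_comm]
  rw [Int.ceil_natCast_add_one_div_two, hfilter, Set.ncard_coe_finset] at hCR
  refine mem_of_lt_card_polygonVertex (k := k) hm hC (T := R.filter (· ∈ C)) ?_
    (fun t ht => (Finset.mem_filter.1 ht).2) (by omega) ?_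
  · intro t ht
    obtain ⟨j, hj, rfl⟩ := Finset.mem_image.1 (Finset.mem_filter.1 ht).1
    exact ⟨j, by simp at hj ⊢; omega, rfl⟩
  · rw [mem_sphere_zero_iff_norm.1 (hBsphere hx)]
    exact half_lt_self hδ

/-- Tightness construction: for all `r ≥ 3`, `b ≥ 1` there is a configuration of
`r` red and `b` blue points in general position such that every convex set with at
least `⌈(r+1)/2⌉ + 1` red points contains all the blue points. -/
theorem balanced_island_tightness (r b : ℕ) (hr : 3 ≤ r) (hb : 1 ≤ b) :
    ∃ P R B : Finset (EuclideanSpace ℝ (Fin 2)),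
      R ∪ B = P ∧ Disjoint R B ∧ R.card = r ∧ B.card = b ∧
      (∀ p ∈ P, ∀ q ∈ P, ∀ s ∈ P, p ≠ q → p ≠ s → q ≠ s →
        ¬ Collinear ℝ ({p, q, s} : Set (EuclideanSpace ℝ (Fin 2)))) ∧
      ∀ C : Set (EuclideanSpace ℝ (Fin 2)), Convex ℝ C →
        (⌈((r : ℚ) + 1) / 2⌉ + 1 ≤ ((C ∩ (R : Set (EuclideanSpace ℝ (Fin 2)))).ncard : ℤ)) →
        (B : Set (EuclideanSpace ℝ (Fin 2))) ⊆ C :=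
  balanced_island_tightness_general r b
end

section
/- Let P be a finite set of n points in general position in the plane, let k be a positive integer, and let I and J be islands of P with |I| = |J| = k. Then there exists an integer m ≤ 3n and a sequence I = I₀, I₁, …, I_m = J such that each I_j is an island of P with |I_j| = k, and for every j with 0 ≤ j < m the symmetric difference I_j Δ I_{j+1} consists of exactly two points. -/
/-!
Fix a linear functional `ℓ` that is injective on `P`, and measure a `k`-island `I` by the number
of points of `P` not above its `ℓ`-highest point `a`. Unless `I` already consists of the `k`
lowest points of `P`, this number exceeds `k` and `I` can be moved down: drop `a`, which keeps an
island since `a` is a vertex of `conv I`, and add a point `q` of `P` below `a` and outside `I`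
whose hull with `I \ {a}` contains as few points of `P` as possible; by an exchange argument
that hull then contains no further point of `P`. Each move lowers the measure, so within
`n - k` moves both `I` and `J` reach the `k` lowest points of `P`, and the two sequences join
into one of at most `2n` steps.
-/

open scoped Classical
open scoped symmDiff

theorem Module.Dual.exists_injOn {K V : Type*} [Field K] [Infinite K] [AddCommGroup V]
    [Module K V] {s : Set V} (hs : s.Finite) : ∃ f : Module.Dual K V, Set.InjOn f s := by
  have : Finite s := hs.to_subtype
  obtain ⟨f, hf⟩ := Module.exists_dual_forall_apply_ne_zero (K := K)
    (fun xy : {xy : s × s // xy.1 ≠ xy.2} ↦ (xy.1.1 : V) - xy.1.2)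
    (fun xy ↦ sub_ne_zero.2 (Subtype.coe_injective.ne xy.2))
  refine ⟨f, fun x hx y hy hxy ↦ by_contra fun hne ↦ hf ⟨(⟨x, hx⟩, ⟨y, hy⟩), ?_⟩ ?_⟩
  · simpa using hne
  · simp [map_sub, hxy]

theorem Finset.card_symmDiff_insert_erase {α : Type*} {I : Finset α} {a q : α}
    (ha : a ∈ I) (hq : q ∉ I) : (I ∆ insert q (I.erase a)).card = 2 := by
  have hqa : q ≠ a := fun h ↦ hq (h ▸ ha)
  rw [show I ∆ insert q (I.erase a) = {a, q} by ext x; simp [mem_symmDiff]; grind]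
  exact card_pair hqa.symm

section downClosure

variable {α β : Type*} [LinearOrder β] (P : Finset α) (f : α → β)

def downClosure (I : Finset α) : Finset α :=
  P.filter fun x ↦ ∃ y ∈ I, f x ≤ f y

variable {P f} {I J : Finset α}

theorem subset_downClosure (hI : I ⊆ P) : I ⊆ downClosure P f I :=
  fun x hx ↦ Finset.mem_filter.2 ⟨hI hx, x, hx, le_rfl⟩

theorem card_downClosure_le : (downClosure P f I).card ≤ P.card :=
  Finset.card_le_card (Finset.filter_subset _ _)

theorem downClosure_eq_filter_le {a : α} (ha : a ∈ I) (hmax : ∀ x ∈ I, f x ≤ f a) :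
    downClosure P f I = P.filter fun x ↦ f x ≤ f a :=
  Finset.filter_congr fun _ _ ↦ ⟨fun ⟨_, hy, hxy⟩ ↦ hxy.trans (hmax _ hy), fun h ↦ ⟨a, ha, h⟩⟩

theorem eq_of_downClosure_eq_self (hI : downClosure P f I = I) (hJ : downClosure P f J = J)
    (hcard : I.card = J.card) : I = J := by
  have hIP : I ⊆ P := hI ▸ Finset.filter_subset _ _
  have hJP : J ⊆ P := hJ ▸ Finset.filter_subset _ _
  have nested : I ⊆ J ∨ J ⊆ I := by
    by_contra! h
    obtain ⟨x, hxI, hxJ⟩ := Finset.not_subset.1 h.1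
    obtain ⟨y, hyJ, hyI⟩ := Finset.not_subset.1 h.2
    rcases le_total (f x) (f y) with hxy | hyx
    · exact hxJ (hJ ▸ Finset.mem_filter.2 ⟨hIP hxI, y, hyJ, hxy⟩)
    · exact hyI (hI ▸ Finset.mem_filter.2 ⟨hJP hyJ, x, hxI, hyx⟩)
  rcases nested with h | h
  · exact Finset.eq_of_subset_of_card_le h hcard.ge
  · exact (Finset.eq_of_subset_of_card_le h hcard.le).symm

end downClosure

section Island

variable {V : Type*} [AddCommGroup V] [Module ℝ V]

theorem eq_of_mem_convexHull_insert_of_mem_convexHull_insert {S : Set V} {q r : V}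
    (hq : q ∉ convexHull ℝ S) (hqr : q ∈ convexHull ℝ (insert r S))
    (hrq : r ∈ convexHull ℝ (insert q S)) : q = r := by
  rcases S.eq_empty_or_nonempty with rfl | hS
  · simpa using hqr
  rw [convexHull_insert hS, mem_convexJoin] at hqr hrq
  obtain ⟨_, hr, z, hz, a, a', ha, ha', haa, hqe⟩ := hqr
  obtain ⟨_, hq', w, hw, b, b', hb, hb', hbb, hre⟩ := hrq
  rw [Set.mem_singleton_iff.mp hr] at hqe
  rw [Set.mem_singleton_iff.mp hq'] at hre
  by_contra hne
  have hab : a * b < 1 := by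
    refine lt_of_le_of_ne (by nlinarith) fun hab ↦ hne ?_
    obtain rfl : a = 1 := by nlinarith
    obtain rfl : a' = 0 := by linarith
    simpa using hqe.symm
  have hc : 0 < 1 - a * b := by linarith
  have key : (1 - a * b) • q = (a * b') • w + a' • z := by
    linear_combination (norm := module) -hqe - a • hre
  refine hq ?_
  rw [← inv_smul_smul₀ hc.ne' q, key, smul_add, smul_smul, smul_smul]
  exact convex_convexHull ℝ S hw hz (by positivity) (by positivity) (by
    rw [← mul_add, show a * b' + a' = 1 - a * b by linear_combination a * hbb + haa,
      inv_mul_cancel₀ hc.ne'])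

def IsIsland (P I : Finset V) : Prop :=
  convexHull ℝ (I : Set V) ∩ P = I

namespace IsIsland

variable {P I S : Finset V}

theorem subset (h : IsIsland P I) : I ⊆ P :=
  fun x hx ↦ (h.symm ▸ hx : x ∈ convexHull ℝ (I : Set V) ∩ P).2

theorem erase (h : IsIsland P I) {a : V}
    (ha : a ∉ convexHull ℝ ((I.erase a : Finset V) : Set V)) : IsIsland P (I.erase a) := by
  apply subset_antisymm
  · rintro x ⟨hx, hxP⟩
    have hxI : x ∈ (I : Set V) := h ▸ ⟨convexHull_mono (by simp) hx, hxP⟩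
    rw [Finset.coe_erase]
    exact ⟨hxI, by rintro rfl; exact ha hx⟩
  · intro x hx
    exact ⟨subset_convexHull ℝ _ hx, h.subset (Finset.mem_of_mem_erase hx)⟩

theorem exists_insert {H : Set V} (hH : Convex ℝ H) (hS : IsIsland P S) (hSH : (S : Set V) ⊆ H)
    (hX : ∃ x ∈ P, x ∈ H ∧ x ∉ S) :
    ∃ q ∈ P, q ∈ H ∧ q ∉ S ∧ IsIsland P (insert q S) := by
  let X := P.filter fun x ↦ x ∈ H ∧ x ∉ S
  let caught (y : V) := P.filter fun z ↦ z ∈ convexHull ℝ (insert y (S : Set V))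
  obtain ⟨x, hxP, hx⟩ := hX
  obtain ⟨q, hqX, hqmin⟩ := X.exists_min_image (fun y ↦ (caught y).card)
    ⟨x, Finset.mem_filter.2 ⟨hxP, hx⟩⟩
  obtain ⟨hqP, hqH, hqS⟩ := Finset.mem_filter.1 hqX
  have hq : q ∉ convexHull ℝ (S : Set V) := fun h ↦ hqS (hS ▸ ⟨h, hqP⟩ : q ∈ (S : Set V))
  refine ⟨q, hqP, hqH, hqS, ?_⟩
  rw [IsIsland, Finset.coe_insert]
  apply subset_antisymm
  · rintro x ⟨hx, hxP⟩
    by_contra hxqS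
    have hxX : x ∈ X := Finset.mem_filter.2 ⟨hxP,
      convexHull_min (Set.insert_subset hqH hSH) hH hx, fun h ↦ hxqS (Or.inr h)⟩
    have hqx : q ∉ convexHull ℝ (insert x (S : Set V)) := fun h ↦
      hxqS (Or.inl (eq_of_mem_convexHull_insert_of_mem_convexHull_insert hq h hx).symm)
    have hsub : caught x ⊂ caught q := by
      refine Finset.ssubset_iff_of_subset (Finset.monotone_filter_right _ fun z _ hz ↦ ?_)
        |>.2 ⟨q, Finset.mem_filter.2 ⟨hqP, subset_convexHull ℝ _ (Set.mem_insert _ _)⟩,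
          fun h ↦ hqx (Finset.mem_filter.1 h).2⟩
      exact convexHull_min (Set.insert_subset hx
        ((Set.subset_insert _ _).trans (subset_convexHull ℝ _))) (convex_convexHull ℝ _) hz
    exact (Finset.card_lt_card hsub).not_ge (hqmin x hxX)
  · rintro x (rfl | hx)
    · exact ⟨subset_convexHull ℝ _ (Set.mem_insert _ _), hqP⟩
    · exact ⟨subset_convexHull ℝ _ (Set.mem_insert_of_mem _ hx), hS.subset hx⟩

theorem exists_step {ℓ : V →ₗ[ℝ] ℝ} (hℓ : Set.InjOn ℓ P) (hI : IsIsland P I)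
    (hlow : downClosure P ℓ I ≠ I) :
    ∃ I', IsIsland P I' ∧ I'.card = I.card ∧ (I ∆ I').card = 2 ∧
      (downClosure P ℓ I').card < (downClosure P ℓ I).card := by
  have hne : I.Nonempty := Finset.nonempty_iff_ne_empty.2 fun h ↦ hlow (by simp [h, downClosure])
  obtain ⟨a, ha, hmax⟩ := I.exists_max_image ℓ hne
  have hbelow : ∀ x ∈ P, ℓ x ≤ ℓ a → x ≠ a → ℓ x < ℓ a := fun x hx hle hxa ↦
    hle.lt_of_ne fun h ↦ hxa (hℓ hx (hI.subset ha) h)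
  have hSH : ((I.erase a : Finset V) : Set V) ⊆ {w | ℓ w < ℓ a} := fun x hx ↦
    hbelow x (hI.subset (Finset.mem_of_mem_erase hx)) (hmax x (Finset.mem_of_mem_erase hx))
      (Finset.ne_of_mem_erase hx)
  have hH : Convex ℝ {w | ℓ w < ℓ a} := convex_halfSpace_lt ℓ.isLinear _
  have hS : IsIsland P (I.erase a) :=
    hI.erase fun h ↦ lt_irrefl (ℓ a) (convexHull_min hSH hH h)
  have hX : ∃ x ∈ P, ℓ x < ℓ a ∧ x ∉ I.erase a := by
    obtain ⟨x, hx, hxI⟩ := Finset.exists_of_ssubset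
      ((subset_downClosure hI.subset).ssubset_of_ne (Ne.symm hlow))
    rw [downClosure_eq_filter_le ha hmax, Finset.mem_filter] at hx
    have hxa : x ≠ a := fun h ↦ hxI (h ▸ ha)
    exact ⟨x, hx.1, hbelow x hx.1 hx.2 hxa, fun h ↦ hxI (Finset.mem_of_mem_erase h)⟩
  obtain ⟨q, hqP, hqa, hqS, hq⟩ := hS.exists_insert hH hSH hX
  have hqI : q ∉ I := fun h ↦ hqS (Finset.mem_erase.2 ⟨fun h ↦ lt_irrefl (ℓ a) (h ▸ hqa), h⟩)
  refine ⟨insert q (I.erase a), hq, ?_, Finset.card_symmDiff_insert_erase ha hqI, ?_⟩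
  · rw [Finset.card_insert_of_notMem hqS, Finset.card_erase_add_one ha]
  · have hdesc : downClosure P ℓ (insert q (I.erase a)) ⊆ (downClosure P ℓ I).erase a := by
      intro x hx
      obtain ⟨hxP, y, hy, hxy⟩ := Finset.mem_filter.1 hx
      have hya : ℓ y < ℓ a := by
        rcases Finset.mem_insert.1 hy with rfl | hy
        exacts [hqa, hSH hy]
      rw [downClosure_eq_filter_le ha hmax, Finset.mem_erase, Finset.mem_filter]
      exact ⟨fun h ↦ (h ▸ hxy.trans_lt hya).false, hxP, (hxy.trans_lt hya).le⟩
    exact Finset.card_lt_card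
      (hdesc.trans_ssubset (Finset.erase_ssubset (subset_downClosure hI.subset ha)))

end IsIsland

def exchangeGraph (P : Finset V) (k : ℕ) :
    SimpleGraph {I : Finset V // IsIsland P I ∧ I.card = k} where
  Adj I J := (I.1 ∆ J.1).card = 2
  symm := ⟨fun I J (h : (I.1 ∆ J.1).card = 2) ↦ by rwa [symmDiff_comm]⟩
  loopless := ⟨fun I (h : (I.1 ∆ I.1).card = 2) ↦ by simp at h⟩

theorem exchangeGraph_adj {P : Finset V} {k : ℕ}
    {I J : {I : Finset V // IsIsland P I ∧ I.card = k}} :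
    (exchangeGraph P k).Adj I J ↔ (I.1 ∆ J.1).card = 2 :=
  Iff.rfl

theorem exchangeGraph.exists_walk_to_downClosed {P : Finset V} {k : ℕ} {ℓ : V →ₗ[ℝ] ℝ}
    (hℓ : Set.InjOn ℓ P) (I : Finset V) (hI : IsIsland P I ∧ I.card = k) :
    ∃ (I₀ : {I : Finset V // IsIsland P I ∧ I.card = k})
      (p : (exchangeGraph P k).Walk ⟨I, hI⟩ I₀),
      downClosure P ℓ I₀.1 = I₀.1 ∧ p.length + k ≤ (downClosure P ℓ I).card := by
  induction h : (downClosure P ℓ I).card using Nat.strong_induction_on generalizing I with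
  | _ N ih =>
  by_cases hlow : downClosure P ℓ I = I
  · exact ⟨⟨I, hI⟩, .nil, hlow, by simp [← h, hlow, hI.2]⟩
  obtain ⟨I', hI', hcard, hadj, hlt⟩ := hI.1.exists_step hℓ hlow
  obtain ⟨I₀, p, hI₀, hp⟩ := ih _ (h ▸ hlt) I' ⟨hI', hcard.trans hI.2⟩ rfl
  refine ⟨I₀, .cons (exchangeGraph_adj.2 hadj) p, hI₀, ?_⟩
  rw [SimpleGraph.Walk.length_cons]
  omega

end Island

theorem island_sequence_general
    (P : Finset (EuclideanSpace ℝ (Fin 2))) (n : ℕ) (hn : P.card = n)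
    (k : ℕ)
    (I J : Finset (EuclideanSpace ℝ (Fin 2)))
    (hIisl : convexHull ℝ (I : Set (EuclideanSpace ℝ (Fin 2))) ∩
      (P : Set (EuclideanSpace ℝ (Fin 2))) = (I : Set (EuclideanSpace ℝ (Fin 2))))
    (hJisl : convexHull ℝ (J : Set (EuclideanSpace ℝ (Fin 2))) ∩
      (P : Set (EuclideanSpace ℝ (Fin 2))) = (J : Set (EuclideanSpace ℝ (Fin 2))))
    (hIk : I.card = k) (hJk : J.card = k) :
    ∃ (m : ℕ) (f : ℕ → Finset (EuclideanSpace ℝ (Fin 2))),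
      m ≤ 3 * n ∧ f 0 = I ∧ f m = J ∧
      (∀ j ≤ m, f j ⊆ P ∧
        convexHull ℝ (f j : Set (EuclideanSpace ℝ (Fin 2))) ∩
          (P : Set (EuclideanSpace ℝ (Fin 2))) = (f j : Set (EuclideanSpace ℝ (Fin 2))) ∧
        (f j).card = k) ∧
      (∀ j < m, (f j ∆ f (j + 1)).card = 2) := by
  obtain ⟨ℓ, hℓ⟩ := Module.Dual.exists_injOn (K := ℝ) P.finite_toSet
  obtain ⟨I₀, p, hI₀, hp⟩ := exchangeGraph.exists_walk_to_downClosed hℓ I ⟨hIisl, hIk⟩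
  obtain ⟨J₀, q, hJ₀, hq⟩ := exchangeGraph.exists_walk_to_downClosed hℓ J ⟨hJisl, hJk⟩
  obtain rfl : I₀ = J₀ :=
    Subtype.ext (eq_of_downClosure_eq_self hI₀ hJ₀ (I₀.2.2.trans J₀.2.2.symm))
  let w := p.append q.reverse
  have hlen : w.length ≤ 3 * n := by
    have := card_downClosure_le (P := P) (f := ℓ) (I := I)
    have := card_downClosure_le (P := P) (f := ℓ) (I := J)
    simp only [w, SimpleGraph.Walk.length_append, SimpleGraph.Walk.length_reverse]
    omega
  refine ⟨w.length, fun j ↦ (w.getVert j).1, hlen, congrArg Subtype.val w.getVert_zero,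
    congrArg Subtype.val w.getVert_length, fun j _ ↦ ?_, fun j hj ↦ ?_⟩
  · exact ⟨(w.getVert j).2.1.subset, (w.getVert j).2⟩
  · -- `convert` bridges the `DecidableEq` instance behind `∆` here and the classical one
    convert exchangeGraph_adj.1 (w.adj_getVert_succ hj)

/-- **Lemma 4.3 (existence part).** Any two `k`-point islands `I`, `J` of an
`n`-point set `P` in general position are connected by a sequence of at most `3n`
steps of `k`-point islands, consecutive ones differing in exactly two points. -/
theorem island_sequence
    (P : Finset (EuclideanSpace ℝ (Fin 2))) (n : ℕ) (hn : P.card = n)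
    (hgp : ∀ p ∈ P, ∀ q ∈ P, ∀ s ∈ P, p ≠ q → p ≠ s → q ≠ s →
      ¬ Collinear ℝ ({p, q, s} : Set (EuclideanSpace ℝ (Fin 2))))
    (k : ℕ) (hk : 1 ≤ k)
    (I J : Finset (EuclideanSpace ℝ (Fin 2)))
    (hI : I ⊆ P) (hJ : J ⊆ P)
    (hIisl : convexHull ℝ (I : Set (EuclideanSpace ℝ (Fin 2))) ∩
      (P : Set (EuclideanSpace ℝ (Fin 2))) = (I : Set (EuclideanSpace ℝ (Fin 2))))
    (hJisl : convexHull ℝ (J : Set (EuclideanSpace ℝ (Fin 2))) ∩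
      (P : Set (EuclideanSpace ℝ (Fin 2))) = (J : Set (EuclideanSpace ℝ (Fin 2))))
    (hIk : I.card = k) (hJk : J.card = k) :
    ∃ (m : ℕ) (f : ℕ → Finset (EuclideanSpace ℝ (Fin 2))),
      m ≤ 3 * n ∧ f 0 = I ∧ f m = J ∧
      (∀ j ≤ m, f j ⊆ P ∧
        convexHull ℝ (f j : Set (EuclideanSpace ℝ (Fin 2))) ∩
          (P : Set (EuclideanSpace ℝ (Fin 2))) = (f j : Set (EuclideanSpace ℝ (Fin 2))) ∧
        (f j).card = k) ∧
      (∀ j < m, (f j ∆ f (j + 1)).card = 2) :=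
  island_sequence_general P n hn k I J hIisl hJisl hIk hJk
end
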